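/- Let R be a commutative valuation ring with infinite residue field k, (A_i)_{i∈I} a family of R-algebras, B an R-algebra which is torsion-free as an R-module, and f : A = ∏_{i∈I} A_i → B a surjective R-algebra homomorphism. Let rk_R(B) denote the rank of B as an R-module (the common cardinality of all maximal R-linearly independent subsets of B). If either (i) rk_R(B) < card(k), or (ii) rk_R(B) < 2^{ℵ0}, then the composite homomorphism A → B → B/Z(B) factors as A → A/U_0 × … × A/U_{n-1} → B/Z(B), where U_0, …, U_{n-1} are ultrafilters on I which are card(k)^+-complete in case (i) and countably complete in case (ii). -/

import Mathlib

universe u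

/-- The setoid on a dependent product given by a filter. -/
def redSetoid {I : Type u} (F : Filter I) (A : I → Type u) : Setoid (∀ i, A i) where
  r a b := {i | a i = b i} ∈ F
  iseqv := by
    refine ⟨fun a => ?_, fun {a b} h => ?_, fun {a b c} h₁ h₂ => ?_⟩
    · simp
    · simpa [eq_comm] using h
    · exact Filter.mem_of_superset (Filter.inter_mem h₁ h₂)
        (fun i hi => hi.1.trans hi.2)

/-- The reduced product of a family of sets with respect to a filter. -/
def ReducedProduct {I : Type u} (F : Filter I) (A : I → Type u) : Type u :=
  Quotient (redSetoid F A)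

/-- The canonical quotient map onto a reduced product. -/
def reducedMk {I : Type u} (F : Filter I) (A : I → Type u) (a : ∀ i, A i) :
    ReducedProduct F A :=
  Quotient.mk (redSetoid F A) a

/-- A filter is `κ`-complete if it is closed under intersections of
families of fewer than `κ` of its members. -/
def KappaComplete {I : Type u} (κ : Cardinal.{u}) (F : Filter I) : Prop :=
  ∀ 𝒮 : Set (Set I), Cardinal.mk 𝒮 < κ → (∀ s ∈ 𝒮, s ∈ F) → ⋂₀ 𝒮 ∈ F

/-- A filter is countably complete if it is closed under countable
intersections of its members. -/
def CountablyComplete {I : Type u} (F : Filter I) : Prop :=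
  ∀ s : ℕ → Set I, (∀ n, s n ∈ F) → (⋂ n, s n) ∈ F

/-- The total annihilator ideal `Z(B) = {x | xB = Bx = 0}` of a (nonunital,
nonassociative) `R`-algebra, as an `R`-submodule. -/
def totalAnnihilator (R : Type u) (B : Type u) [CommRing R]
    [NonUnitalNonAssocRing B] [Module R B] [SMulCommClass R B B]
    [IsScalarTower R B B] : Submodule R B where
  carrier := {x | ∀ y : B, x * y = 0 ∧ y * x = 0}
  zero_mem' := fun y => ⟨zero_mul y, mul_zero y⟩
  add_mem' := by
    intro a b ha hb y
    exact ⟨by rw [add_mul, (ha y).1, (hb y).1, add_zero],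
           by rw [mul_add, (ha y).2, (hb y).2, add_zero]⟩
  smul_mem' := by
    intro c x hx y
    exact ⟨by rw [smul_mul_assoc, (hx y).1, smul_zero],
           by rw [mul_smul_comm, (hx y).2, smul_zero]⟩


/-!
Call `S ⊆ I` null if `f` maps everything supported on `S` into `Z(B)`. The complements of null
sets form a filter `N`, and `f a ≡ f b` modulo `Z(B)` as soon as `{i | a i = b i} ∈ N`.

Given `x` with `f x ∉ Z(B)` and a labelling `p : I → Λ`, rescale `x` blockwise by vectors
`h ∈ R^Λ`. As `f` is surjective, the `h` whose rescaling lands in `Z(B)` form an ideal of `R^Λ`.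
If the blocks are null, or if `x` is glued from witnesses on infinitely many disjoint non-null
sets, every element of this ideal has infinitely many non-unit coordinates. Modulo the reduction
of the ideal to `k^Λ`, the Cauchy vectors `α ↦ (b t - a α)⁻¹` (`t ∈ k`) are independent, and for
`Λ = ℕ` and `card k < 2 ^ ℵ₀` the quotient has at least `2 ^ ℵ₀` elements, witnessed by a binary
tree of sequences. Over a valuation ring, independence lifts to the torsion-free module `B`, so
`rk_R B ≥ card k`, resp. `rk_R B ≥ 2 ^ ℵ₀`.

So under (i), resp. (ii), `N` is `card(k)⁺`-complete, resp. countably complete, and there is no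
sequence of pairwise disjoint non-null sets. The latter makes `N` a finite intersection of
ultrafilters `N ⊓ 𝓟 P`, which inherit the completeness of `N`.
-/

open Function Set Cardinal Filter IsLocalRing

theorem ValuationRing.exists_dvd_forall {R ι : Type*} [Monoid R] [PreValuationRing R]
    (g : ι → R) {s : Finset ι} (hs : s.Nonempty) : ∃ t ∈ s, ∀ t' ∈ s, g t ∣ g t' := by
  classical
  induction hs using Finset.Nonempty.cons_induction with
  | singleton a => exact ⟨a, by simp⟩
  | cons a s _ _ ih =>
    obtain ⟨t, hts, ht⟩ := ih
    rcases ValuationRing.dvd_total (g t) (g a) with h | h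
    · exact ⟨t, Finset.mem_cons_of_mem hts, by simpa [h] using ht⟩
    · exact ⟨a, Finset.mem_cons_self a s, by simpa using fun t' ht' => h.trans (ht t' ht')⟩

/-- Divide a vanishing combination by a coefficient of least valuation. -/
theorem ValuationRing.linearIndependent_of_forall_isUnit {R M ι : Type*} [CommRing R]
    [IsDomain R] [ValuationRing R] [AddCommGroup M] [Module R M] [NoZeroSMulDivisors R M]
    {v : ι → M}
    (hv : ∀ (s : Finset ι) (d : ι → R), ∀ t ∈ s, IsUnit (d t) → ∑ t' ∈ s, d t' • v t' ≠ 0) :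
    LinearIndependent R v := by
  rw [linearIndependent_iff']
  intro s g hg t ht
  by_contra hgt
  obtain ⟨t₁, ht₁, hdvd⟩ := ValuationRing.exists_dvd_forall g ⟨t, ht⟩
  have hg₁ : g t₁ ≠ 0 := fun h => hgt (zero_dvd_iff.mp (h ▸ hdvd t ht))
  choose! d hd using hdvd
  have hd₁ : d t₁ = 1 := mul_left_cancel₀ hg₁ (by rw [← hd t₁ ht₁, mul_one])
  refine hv s d t₁ ht₁ (hd₁ ▸ isUnit_one) ((smul_eq_zero.mp ?_).resolve_left hg₁)
  rw [Finset.smul_sum, ← hg]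
  exact Finset.sum_congr rfl fun t' ht' => by rw [smul_smul, ← hd t' ht']

theorem Infinite.exists_embedding_disjoint (X : Type*) [Infinite X] :
    ∃ l r : X ↪ X, ∀ x y, l x ≠ r y := by
  obtain ⟨φ⟩ : Nonempty (X ⊕ X ≃ X) :=
    Cardinal.eq.mp (by simp [Cardinal.add_eq_self (Cardinal.aleph0_le_mk X)])
  exact ⟨Embedding.inl.trans φ.toEmbedding, Embedding.inr.trans φ.toEmbedding,
    fun x y h => by simpa using φ.injective h⟩

theorem exists_finite_setOf_eq_of_ne (X : Type*) [Infinite X] :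
    ∃ g : (ℕ → Bool) → ℕ → X, ∀ σ τ, σ ≠ τ → {n | g σ n = g τ n}.Finite := by
  obtain ⟨e, he⟩ := exists_injective_nat (Σ n, Fin n → Bool)
  refine ⟨fun σ n => Infinite.natEmbedding X (e ⟨n, fun i => σ i⟩), fun σ τ hστ => ?_⟩
  obtain ⟨n₀, hn₀⟩ := Function.ne_iff.mp hστ
  refine (finite_Iic n₀).subset fun n hn => ?_
  by_contra hlt
  have hprefix := eq_of_heq (Sigma.mk.inj (he ((Infinite.natEmbedding X).injective hn))).2
  exact hn₀ (congrFun hprefix ⟨n₀, not_le.mp hlt⟩)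

section Field

variable {K : Type*} [Field K]

open Polynomial in
/-- Clearing denominators gives a polynomial, nonzero since it does not vanish at the pole
`b t₀`. -/
theorem finite_setOf_sum_mul_inv_sub_eq_zero {κ : Type*} {b : κ → K} (hb : Injective b)
    {s : Finset κ} {c : κ → K} {t₀ : κ} (ht₀ : t₀ ∈ s) (hc : c t₀ ≠ 0) :
    {z : K | (∀ t ∈ s, b t ≠ z) ∧ ∑ t ∈ s, c t * (b t - z)⁻¹ = 0}.Finite := by
  classical
  set q : K[X] := ∑ t ∈ s, C (c t) * ∏ t' ∈ s.erase t, (C (b t') - X)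
  have hq_eval (z : K) (hz : ∀ t ∈ s, b t ≠ z) :
      q.eval z = (∏ t ∈ s, (b t - z)) * ∑ t ∈ s, c t * (b t - z)⁻¹ := by
    simp only [q, eval_finsetSum, eval_mul, eval_C, eval_prod, eval_sub, eval_X, Finset.mul_sum]
    refine Finset.sum_congr rfl fun t ht => ?_
    rw [← Finset.mul_prod_erase s _ ht]
    field_simp [sub_ne_zero.mpr (hz t ht)]
  have hq : q ≠ 0 := by
    intro h
    have hq₀ := congrArg (Polynomial.eval (b t₀)) h
    rw [eval_zero, eval_finsetSum, Finset.sum_eq_single_of_mem t₀ ht₀] at hq₀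
    · simp only [eval_mul, eval_C, eval_prod, eval_sub, eval_X] at hq₀
      refine mul_ne_zero hc (Finset.prod_ne_zero_iff.mpr fun t ht => ?_) hq₀
      exact sub_ne_zero.mpr fun h => (Finset.mem_erase.mp ht).1 (hb h)
    · intro t _ hne
      simp [eval_prod, Finset.prod_eq_zero (Finset.mem_erase.mpr ⟨Ne.symm hne, ht₀⟩)]
  refine (q.finite_setOfPred_isRoot hq).subset fun z ⟨hz, hsum⟩ => ?_
  simp [IsRoot, hq_eval z hz, hsum]

theorem linearIndependent_mkQ_inv_sub {Λ κ : Type*} {V : Submodule K (Λ → K)}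
    (hV : ∀ v ∈ V, {α | v α = 0}.Infinite) {a : Λ → K} (ha : Injective a) {b : κ → K}
    (hb : Injective b) (hab : ∀ t α, b t ≠ a α) :
    LinearIndependent K fun t => V.mkQ fun α => (b t - a α)⁻¹ := by
  rw [linearIndependent_iff']
  intro s c hc t₀ ht₀
  by_contra hc₀
  simp_rw [← map_smul, ← map_sum, Submodule.mkQ_apply, Submodule.Quotient.mk_eq_zero] at hc
  refine hV _ hc (((finite_setOf_sum_mul_inv_sub_eq_zero hb ht₀ hc₀).preimage ha.injOn).subset ?_)
  intro α hα
  simpa [Finset.sum_apply, hab] using hα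

theorem two_pow_aleph0_le_rank_quotient [Infinite K] (hK : #K < 2 ^ ℵ₀)
    {V : Submodule K (ℕ → K)} (hV : ∀ v ∈ V, {n | v n = 0}.Infinite) :
    2 ^ ℵ₀ ≤ Module.rank K ((ℕ → K) ⧸ V) := by
  obtain ⟨g, hg⟩ := exists_finite_setOf_eq_of_ne K
  have hinj : Injective fun σ => V.mkQ (g σ) := by
    intro σ τ h
    by_contra hστ
    refine hV _ ((Submodule.Quotient.eq V).mp h) ((hg σ τ hστ).subset fun n hn => ?_)
    simpa [sub_eq_zero] using hn
  have hcard : 2 ^ ℵ₀ ≤ #((ℕ → K) ⧸ V) := by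
    simpa using Cardinal.lift_mk_le_lift_mk_of_injective hinj
  rw [Module.Free.rank_eq_mk_of_infinite_lt K _ (by simpa using hK.trans_le hcard)]
  exact hcard

end Field

section Residue

variable {R : Type*} [CommRing R] [IsLocalRing R]

instance : RingHomSurjective (residue R) := ⟨residue_surjective⟩

noncomputable def piResidue (Λ : Type*) : (Λ → R) →ₛₗ[residue R] Λ → ResidueField R where
  toFun h β := residue R (h β)
  map_add' _ _ := funext fun _ => map_add _ _ _
  map_smul' _ _ := funext fun _ => map_mul _ _ _

@[simp]
theorem piResidue_apply {Λ : Type*} (h : Λ → R) (β : Λ) : piResidue Λ h β = residue R (h β) :=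
  rfl

theorem infinite_setOf_eq_zero_of_mem_map {Λ : Type*} {N : Submodule R (Λ → R)}
    (hN : ∀ h ∈ N, {β | ¬IsUnit (h β)}.Infinite) :
    ∀ v ∈ N.map (piResidue Λ), {β | v β = 0}.Infinite := by
  rintro _ ⟨h, hh, rfl⟩
  convert hN h hh using 3 with β
  rw [← residue_ne_zero_iff_isUnit, not_not, piResidue_apply]

end Residue

section RankBounds

variable {R : Type u} [CommRing R] [IsDomain R] [ValuationRing R] {B : Type u} [AddCommGroup B]
  [Module R B] [NoZeroSMulDivisors R B] {Λ : Type*}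

theorem mk_le_rank_of_linearIndependent_mkQ (Φ : (Λ → R) →ₗ[R] B) {ι : Type u}
    {w : ι → Λ → ResidueField R}
    (hw : LinearIndependent (ResidueField R) fun t =>
      ((LinearMap.ker Φ).map (piResidue Λ)).mkQ (w t)) :
    #ι ≤ Module.rank R B := by
  choose v hv using fun t β => residue_surjective (w t β)
  have hπv : ∀ t, piResidue Λ (v t) = w t := fun t => funext (hv t)
  refine LinearIndependent.cardinal_le_rank (v := Φ ∘ v)
    (ValuationRing.linearIndependent_of_forall_isUnit fun s d t ht hu hsum => ?_)
  refine (residue_ne_zero_iff_isUnit _).mpr hu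
    (linearIndependent_iff'.mp hw s (fun t => residue R (d t)) ?_ t ht)
  simp_rw [← map_smul, ← map_sum, Submodule.mkQ_apply, Submodule.Quotient.mk_eq_zero]
  refine ⟨∑ t ∈ s, d t • v t, by simpa using hsum, ?_⟩
  simp [hπv]

variable [Infinite (ResidueField R)]

theorem mk_residueField_le_rank {Φ : (Λ → R) →ₗ[R] B}
    (hΦ : ∀ h ∈ LinearMap.ker Φ, {β | ¬IsUnit (h β)}.Infinite) (e : Λ ↪ ResidueField R) :
    #(ResidueField R) ≤ Module.rank R B := by
  obtain ⟨l, r, hlr⟩ := Infinite.exists_embedding_disjoint (ResidueField R)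
  exact mk_le_rank_of_linearIndependent_mkQ Φ <| linearIndependent_mkQ_inv_sub
    (infinite_setOf_eq_zero_of_mem_map hΦ) (e.trans r).injective l.injective
    fun t α => hlr t (e α)

theorem two_pow_aleph0_le_rank {Φ : (ℕ → R) →ₗ[R] B}
    (hΦ : ∀ h ∈ LinearMap.ker Φ, {n | ¬IsUnit (h n)}.Infinite) :
    2 ^ ℵ₀ ≤ Module.rank R B := by
  by_cases hk : #(ResidueField R) < 2 ^ ℵ₀
  · set V := (LinearMap.ker Φ).map (piResidue ℕ)
    let b := Module.Basis.ofVectorSpace (ResidueField R) ((ℕ → ResidueField R) ⧸ V)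
    choose w hw using fun t => V.mkQ_surjective (b t)
    calc 2 ^ ℵ₀ ≤ Module.rank (ResidueField R) ((ℕ → ResidueField R) ⧸ V) :=
          two_pow_aleph0_le_rank_quotient hk (infinite_setOf_eq_zero_of_mem_map hΦ)
      _ = #(Module.Basis.ofVectorSpaceIndex (ResidueField R) ((ℕ → ResidueField R) ⧸ V)) :=
          b.mk_eq_rank''.symm
      _ ≤ Module.rank R B :=
          mk_le_rank_of_linearIndependent_mkQ Φ (funext hw ▸ b.linearIndependent)
  · exact (not_lt.mp hk).trans (mk_residueField_le_rank hΦ (Infinite.natEmbedding _))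

end RankBounds

section Ideal

variable {R Λ : Type*} [CommRing R] {𝔞 : Ideal (Λ → R)} {h : Λ → R}

theorem Ideal.indicator_isUnit_mem (hh : h ∈ 𝔞) : {β | IsUnit (h β)}.indicator 1 ∈ 𝔞 := by
  convert 𝔞.mul_mem_left (fun β => Ring.inverse (h β)) hh using 1
  ext β
  by_cases hβ : IsUnit (h β)
  · simp [hβ, Ring.inverse_mul_cancel]
  · simp [hβ, Ring.inverse_non_unit]

/-- `1` is the indicator of the unit coordinates of `h` plus the unit vectors at its finitely
many non-unit coordinates. -/
theorem Ideal.infinite_setOf_not_isUnit [DecidableEq Λ] (h𝔞 : 𝔞 ≠ ⊤)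
    (hsingle : ∀ β, Pi.single β 1 ∈ 𝔞) (hh : h ∈ 𝔞) : {β | ¬IsUnit (h β)}.Infinite := by
  intro hfin
  refine h𝔞 ((Ideal.eq_top_iff_one _).mpr ?_)
  have hnonunit : {β | ¬IsUnit (h β)}.indicator 1 ∈ 𝔞 := by
    convert 𝔞.sum_mem (t := hfin.toFinset) fun β _ => hsingle β using 1
    ext γ
    by_cases hγ : IsUnit (h γ) <;> simp [hγ, Finset.sum_apply]
  simpa [← compl_ofPred, Set.indicator_self_add_compl] using
    𝔞.add_mem (Ideal.indicator_isUnit_mem hh) hnonunit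

theorem Ideal.not_isUnit_apply [DecidableEq Λ] (hsingle : ∀ β, Pi.single β 1 ∉ 𝔞) (hh : h ∈ 𝔞)
    (β : Λ) : ¬IsUnit (h β) := by
  intro hβ
  refine hsingle β ?_
  convert 𝔞.mul_mem_left (Pi.single β 1) (Ideal.indicator_isUnit_mem hh) using 1
  ext γ
  by_cases hγ : γ = β
  · subst hγ
    simp [hβ]
  · simp [hγ]

end Ideal

section Decomposition

variable {I : Type*} {F : Filter I}

theorem Filter.mem_inf_principal_iff_compl_sdiff_mem {S T : Set I} :
    T ∈ F ⊓ 𝓟 S ↔ (S \ T)ᶜ ∈ F := by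
  rw [mem_inf_principal', compl_sdiff, union_comm]

variable (F) in
def IsFinitelyUltra (S : Set I) : Prop :=
  ∃ 𝒰 : Set (Ultrafilter I), 𝒰.Finite ∧ (∀ U ∈ 𝒰, ∃ P, (U : Filter I) = F ⊓ 𝓟 P) ∧
    F ⊓ 𝓟 S ≤ ⨆ U ∈ 𝒰, (U : Filter I)

theorem isFinitelyUltra_of_compl_mem {S : Set I} (hS : Sᶜ ∈ F) : IsFinitelyUltra F S :=
  ⟨∅, finite_empty, by simp, by simp [inf_principal_eq_bot.mpr hS]⟩

theorem IsFinitelyUltra.of_inter_sdiff {S T : Set I} (h₁ : IsFinitelyUltra F (S ∩ T))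
    (h₂ : IsFinitelyUltra F (S \ T)) : IsFinitelyUltra F S := by
  obtain ⟨𝒰₁, hfin₁, hP₁, hle₁⟩ := h₁
  obtain ⟨𝒰₂, hfin₂, hP₂, hle₂⟩ := h₂
  refine ⟨𝒰₁ ∪ 𝒰₂, hfin₁.union hfin₂, fun U hU => hU.elim (hP₁ U) (hP₂ U), ?_⟩
  rw [iSup_union, ← inter_union_sdiff S T, ← sup_principal, inf_sup_left]
  exact sup_le_sup hle₁ hle₂

theorem IsFinitelyUltra.of_forall_mem_or {S : Set I}
    (h : ∀ T, T ∈ F ⊓ 𝓟 S ∨ Tᶜ ∈ F ⊓ 𝓟 S) : IsFinitelyUltra F S := by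
  by_cases hS : Sᶜ ∈ F
  · exact isFinitelyUltra_of_compl_mem hS
  have hne : (F ⊓ 𝓟 S).NeBot := ⟨mt inf_principal_eq_bot.mp hS⟩
  let U := Ultrafilter.ofComplNotMemIff (F ⊓ 𝓟 S) fun T =>
    ⟨(h T).resolve_right, fun hT hTc => (F ⊓ 𝓟 S).neBot_iff.mp hne (empty_mem_iff_bot.mp
      (by simpa using inter_mem hT hTc))⟩
  refine ⟨{U}, finite_singleton U, fun V hV => ⟨S, by rw [hV]; rfl⟩, ?_⟩
  rw [iSup_singleton]
  exact le_rfl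

theorem exists_subset_not_isFinitelyUltra {S : Set I} (hS : ¬IsFinitelyUltra F S) :
    ∃ S' ⊆ S, ¬IsFinitelyUltra F S' ∧ (S \ S')ᶜ ∉ F := by
  obtain ⟨T, hT, hTc⟩ : ∃ T, T ∉ F ⊓ 𝓟 S ∧ Tᶜ ∉ F ⊓ 𝓟 S := by
    by_contra! h
    exact hS (.of_forall_mem_or fun T => or_iff_not_imp_left.mpr (h T))
  rw [mem_inf_principal_iff_compl_sdiff_mem] at hT hTc
  rw [sdiff_compl] at hTc
  by_cases h₁ : IsFinitelyUltra F (S ∩ T)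
  · exact ⟨S \ T, sdiff_subset, fun h₂ => hS (h₁.of_inter_sdiff h₂),
      by rwa [sdiff_sdiff_right_self]⟩
  · exact ⟨S ∩ T, inter_subset_left, h₁, by rwa [sdiff_self_inter]⟩

/-- If `univ` were not finitely ultra, splitting off positive pieces again and again would produce
a sequence of pairwise disjoint positive sets. -/
theorem Filter.exists_ultrafilters_of_not_exists_pairwise_disjoint
    (hF : ¬∃ T : ℕ → Set I, Pairwise (Disjoint on T) ∧ ∀ n, (T n)ᶜ ∉ F) :
    ∃ (n : ℕ) (U : Fin n → Ultrafilter I), (∀ m, ∃ P, (U m : Filter I) = F ⊓ 𝓟 P) ∧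
      ∀ S, (∀ m, S ∈ U m) → S ∈ F := by
  have huniv : IsFinitelyUltra F univ := by
    by_contra h
    choose next hsub hbad hpos using fun S : {S // ¬IsFinitelyUltra F S} =>
      exists_subset_not_isFinitelyUltra S.2
    let step (S : {S // ¬IsFinitelyUltra F S}) : {S // ¬IsFinitelyUltra F S} :=
      ⟨next S, hbad S⟩
    let seq (n : ℕ) := step^[n] ⟨univ, h⟩
    have hanti : Antitone fun n => (seq n).1 := antitone_nat_of_succ_le fun n => by
      simp only [seq, iterate_succ_apply']
      exact hsub _
    refine hF ⟨fun n => (seq n).1 \ next (seq n), (pairwise_disjoint_on _).mpr fun m n hmn => ?_,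
      fun n => hpos _⟩
    have hle : (seq n).1 ⊆ next (seq m) := by
      simpa only [seq, iterate_succ_apply'] using hanti (Nat.succ_le_of_lt hmn)
    exact disjoint_sdiff_left.mono_right (sdiff_subset.trans hle)
  obtain ⟨𝒰, hfin, hP, hle⟩ := huniv
  obtain ⟨n, U, -, rfl⟩ := hfin.fin_param
  refine ⟨n, U, fun m => hP _ (mem_range_self m), fun S hS => ?_⟩
  rw [principal_univ, inf_top_eq] at hle
  exact hle (by simpa [Filter.mem_iSup] using hS)

end Decomposition

section Algebras

variable {R : Type u} [CommRing R] {I : Type u} {A : I → Type u}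
  [∀ i, NonUnitalNonAssocRing (A i)] [∀ i, Module R (A i)]
  {B : Type u} [NonUnitalNonAssocRing B] [Module R B] [SMulCommClass R B B]
  [IsScalarTower R B B] {f : (∀ i, A i) →ₙₐ[R] B} {Λ : Type*}

variable (f) in
def IsNull (S : Set I) : Prop :=
  ∀ a : ∀ i, A i, (∀ i ∉ S, a i = 0) → f a ∈ totalAnnihilator R B

theorem IsNull.mono {S T : Set I} (hT : IsNull f T) (hST : S ⊆ T) : IsNull f S :=
  fun a ha => hT a fun i hi => ha i fun h => hi (hST h)

theorem isNull_empty : IsNull f ∅ := by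
  intro a ha
  rw [show a = 0 from funext fun i => ha i (notMem_empty i), map_zero]
  exact zero_mem _

theorem IsNull.union {S T : Set I} (hS : IsNull f S) (hT : IsNull f T) : IsNull f (S ∪ T) := by
  classical
  intro a ha
  have hsplit : a = S.piecewise a 0 + S.piecewise (0 : ∀ i, A i) a := by
    ext i
    by_cases hi : i ∈ S <;> simp [hi]
  rw [hsplit, map_add]
  refine add_mem (hS _ fun i hi => by simp [hi]) (hT _ fun i hi => ?_)
  by_cases hiS : i ∈ S
  · simp [hiS]
  · simpa [hiS] using ha i (by simp [hiS, hi])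

variable (f) in
def nullFilter : Filter I :=
  comk (IsNull f) isNull_empty (fun _ ht _ hs => ht.mono hs) (fun _ hs _ ht => hs.union ht)

theorem mem_nullFilter {S : Set I} : S ∈ nullFilter f ↔ IsNull f Sᶜ := Iff.rfl

theorem mk_eq_mk_of_mem_nullFilter {a b : ∀ i, A i} (h : {i | a i = b i} ∈ nullFilter f) :
    Submodule.Quotient.mk (p := totalAnnihilator R B) (f a) = Submodule.Quotient.mk (f b) := by
  rw [Submodule.Quotient.eq, ← map_sub]
  exact h (a - b) fun i hi => sub_eq_zero.mpr (by simpa using hi)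

theorem exists_factorization_reducedProduct
    (hT : ¬∃ T : ℕ → Set I, Pairwise (Disjoint on T) ∧ ∀ n, ¬IsNull f (T n)) :
    ∃ (n : ℕ) (U : Fin n → Ultrafilter I),
      (∀ m, ∃ P, (U m : Filter I) = nullFilter f ⊓ 𝓟 P) ∧
      ∃ g : (∀ m, ReducedProduct (U m : Filter I) A) → B ⧸ totalAnnihilator R B,
        (fun a => Submodule.Quotient.mk (f a) : (∀ i, A i) → B ⧸ totalAnnihilator R B)
          = g ∘ fun (a : ∀ i, A i) (m : Fin n) => reducedMk (U m : Filter I) A a := by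
  obtain ⟨n, U, hU, hle⟩ := exists_ultrafilters_of_not_exists_pairwise_disjoint
    (F := nullFilter f) (by simpa [mem_nullFilter] using hT)
  have hfactor : FactorsThrough (fun a => Submodule.Quotient.mk (f a) :
      (∀ i, A i) → B ⧸ totalAnnihilator R B)
      fun (a : ∀ i, A i) (m : Fin n) => reducedMk (U m : Filter I) A a :=
    fun a b hab => mk_eq_mk_of_mem_nullFilter (hle _ fun m => Quotient.exact (congrFun hab m))
  exact ⟨n, U, hU, extend _ _ 0, funext fun a => (hfactor.extend_apply 0 a).symm⟩

def blockScale (p : I → Λ) (x : ∀ i, A i) : (Λ → R) →ₗ[R] ∀ i, A i :=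
  LinearMap.pi fun i => (LinearMap.proj (p i)).smulRight (x i)

@[simp]
theorem blockScale_apply (p : I → Λ) (x : ∀ i, A i) (h : Λ → R) (i : I) :
    blockScale p x h i = h (p i) • x i :=
  rfl

@[simp]
theorem blockScale_one (p : I → Λ) (x : ∀ i, A i) : blockScale p x (1 : Λ → R) = x := by
  ext i
  simp

variable [∀ i, SMulCommClass R (A i) (A i)] [∀ i, IsScalarTower R (A i) (A i)]

theorem blockScale_mul_mul (p : I → Λ) (x c : ∀ i, A i) (e h : Λ → R) :
    blockScale p x (e * h) * c = blockScale p x h * blockScale p c e := by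
  ext i
  simp only [Pi.mul_apply, blockScale_apply, smul_mul_assoc, mul_smul_comm, smul_smul]

theorem mul_blockScale_mul (p : I → Λ) (x c : ∀ i, A i) (e h : Λ → R) :
    c * blockScale p x (e * h) = blockScale p c e * blockScale p x h := by
  ext i
  simp only [Pi.mul_apply, blockScale_apply, smul_mul_assoc, mul_smul_comm, smul_smul, mul_comm]

variable (f) in
def blockIdeal (hf : Surjective f) (p : I → Λ) (x : ∀ i, A i) : Ideal (Λ → R) where
  carrier := {h | f (blockScale p x h) ∈ totalAnnihilator R B}
  add_mem' {a b} ha hb := show f (blockScale p x (a + b)) ∈ totalAnnihilator R B by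
    rw [map_add, map_add]
    exact add_mem ha hb
  zero_mem' := show f (blockScale p x 0) ∈ totalAnnihilator R B by
    rw [map_zero, map_zero]
    exact zero_mem _
  smul_mem' e h hh y := by
    obtain ⟨c, rfl⟩ := hf y
    rw [smul_eq_mul, ← map_mul, ← map_mul, blockScale_mul_mul, mul_blockScale_mul, map_mul,
      map_mul]
    exact ⟨(hh _).1, (hh _).2⟩

theorem mem_blockIdeal {hf : Surjective f} {p : I → Λ} {x : ∀ i, A i} {h : Λ → R} :
    h ∈ blockIdeal f hf p x ↔ f (blockScale p x h) ∈ totalAnnihilator R B :=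
  Iff.rfl

theorem mem_blockIdeal_of_mem_ker {hf : Surjective f} {p : I → Λ} {x : ∀ i, A i} {h : Λ → R}
    (hh : h ∈ LinearMap.ker ((f : (∀ i, A i) →ₗ[R] B) ∘ₗ blockScale p x)) :
    h ∈ blockIdeal f hf p x := by
  have : f (blockScale p x h) = 0 := LinearMap.mem_ker.mp hh
  exact mem_blockIdeal.mpr (this ▸ zero_mem _)

/-- Rescale the witness `x` of non-nullity along the blocks `W β`: the kernel lies in a proper
ideal of `R^Λ` containing the unit vectors. -/
theorem exists_linearMap_of_not_isNull_iUnion (hf : Surjective f) {W : Λ → Set I}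
    (hW : ∀ β, IsNull f (W β)) (hU : ¬IsNull f (⋃ β, W β)) :
    ∃ Φ : (Λ → R) →ₗ[R] B, ∀ h ∈ LinearMap.ker Φ, {β | ¬IsUnit (h β)}.Infinite := by
  classical
  obtain ⟨x, hx, hfx⟩ : ∃ x : ∀ i, A i, (∀ i ∉ ⋃ β, W β, x i = 0) ∧
      f x ∉ totalAnnihilator R B := by
    simpa [IsNull] using hU
  have : Nonempty Λ := by
    by_contra hΛ
    rw [not_nonempty_iff] at hΛ
    exact hU (by simpa using isNull_empty)
  let p : I → Λ := fun i => Classical.epsilon fun β => i ∈ W β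
  have hp (i : I) (hi : x i ≠ 0) : i ∈ W (p i) := by
    obtain ⟨β, hβ⟩ := mem_iUnion.mp (not_imp_comm.mp (hx i) hi)
    exact Classical.epsilon_spec (p := fun β => i ∈ W β) ⟨β, hβ⟩
  refine ⟨(f : (∀ i, A i) →ₗ[R] B) ∘ₗ blockScale p x, fun h hh =>
    Ideal.infinite_setOf_not_isUnit (𝔞 := blockIdeal f hf p x) ?_ (fun β => ?_)
      (mem_blockIdeal_of_mem_ker hh)⟩
  · rw [Ne, Ideal.eq_top_iff_one]
    exact fun h1 => hfx (by simpa using mem_blockIdeal.mp h1)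
  · refine mem_blockIdeal.mpr (hW β _ fun i hi => ?_)
    by_cases hpi : p i = β
    · by_contra hxi
      exact hi (hpi ▸ hp i (by simpa [hpi] using hxi))
    · simp [hpi]

/-- Glue the witnesses of non-nullity of the `T β` into a single `x`: the kernel lies in an
ideal of `R^Λ` containing no unit vector. -/
theorem exists_linearMap_of_pairwise_disjoint [Infinite Λ] (hf : Surjective f) {T : Λ → Set I}
    (hT : Pairwise (Disjoint on T)) (hpos : ∀ β, ¬IsNull f (T β)) :
    ∃ Φ : (Λ → R) →ₗ[R] B, ∀ h ∈ LinearMap.ker Φ, {β | ¬IsUnit (h β)}.Infinite := by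
  classical
  choose x hx hfx using fun β => show ∃ x : ∀ i, A i, (∀ i ∉ T β, x i = 0) ∧
      f x ∉ totalAnnihilator R B by simpa [IsNull] using hpos β
  let p : I → Λ := fun i => Classical.epsilon fun β => i ∈ T β
  have hp (i : I) (β : Λ) (hi : i ∈ T β) : p i = β :=
    hT.eq (not_disjoint_iff.mpr
      ⟨i, Classical.epsilon_spec (p := fun β => i ∈ T β) ⟨β, hi⟩, hi⟩)
  have hsingle (β : Λ) : blockScale p (fun i => x (p i) i) (Pi.single β (1 : R)) = x β := by
    ext i
    by_cases hpi : p i = β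
    · simp [hpi]
    · simp [hpi, hx β i (mt (hp i β) hpi)]
  refine ⟨(f : (∀ i, A i) →ₗ[R] B) ∘ₗ blockScale p (fun i => x (p i) i), fun h hh => ?_⟩
  have hnonunit : ∀ β, ¬IsUnit (h β) :=
    Ideal.not_isUnit_apply (𝔞 := blockIdeal f hf p _)
      (fun β hβ => hfx β (hsingle β ▸ mem_blockIdeal.mp hβ)) (mem_blockIdeal_of_mem_ker hh)
  simpa [hnonunit] using infinite_univ

variable [IsDomain R] [ValuationRing R] [Infinite (ResidueField R)] [NoZeroSMulDivisors R B]

theorem isNull_iUnion_of_rank_lt (hf : Surjective f)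
    (hrk : Module.rank R B < #(ResidueField R)) (e : Λ ↪ ResidueField R)
    {W : Λ → Set I} (hW : ∀ β, IsNull f (W β)) : IsNull f (⋃ β, W β) := by
  by_contra hU
  obtain ⟨Φ, hΦ⟩ := exists_linearMap_of_not_isNull_iUnion hf hW hU
  exact (mk_residueField_le_rank hΦ e).not_gt hrk

theorem isNull_iUnion_nat_of_rank_lt (hf : Surjective f) (hrk : Module.rank R B < 2 ^ ℵ₀)
    {W : ℕ → Set I} (hW : ∀ n, IsNull f (W n)) : IsNull f (⋃ n, W n) := by
  by_contra hU
  obtain ⟨Φ, hΦ⟩ := exists_linearMap_of_not_isNull_iUnion hf hW hU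
  exact (two_pow_aleph0_le_rank hΦ).not_gt hrk

theorem cardinalInterFilter_nullFilter (hf : Surjective f)
    (hrk : Module.rank R B < #(ResidueField R)) :
    CardinalInterFilter (nullFilter f) (Order.succ #(ResidueField R)) := by
  refine ⟨fun 𝒮 h𝒮 hmem => ?_⟩
  obtain ⟨e⟩ := (Cardinal.le_def _ _).mp (Order.lt_succ_iff.mp h𝒮)
  rw [mem_nullFilter, compl_sInter, sUnion_image, biUnion_eq_iUnion]
  exact isNull_iUnion_of_rank_lt hf hrk e fun s => hmem s s.2

theorem countableInterFilter_nullFilter (hf : Surjective f) (hrk : Module.rank R B < 2 ^ ℵ₀) :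
    CountableInterFilter (nullFilter f) := by
  refine ⟨fun 𝒮 h𝒮 hmem => ?_⟩
  rcases 𝒮.eq_empty_or_nonempty with rfl | hne
  · simp
  obtain ⟨s, rfl⟩ := h𝒮.exists_eq_range hne
  rw [sInter_range, mem_nullFilter, compl_iInter]
  exact isNull_iUnion_nat_of_rank_lt hf hrk fun n => hmem _ (mem_range_self n)

theorem not_exists_pairwise_disjoint_not_isNull (hf : Surjective f)
    (hrk : Module.rank R B < #(ResidueField R) ∨ Module.rank R B < 2 ^ ℵ₀) :
    ¬∃ T : ℕ → Set I, Pairwise (Disjoint on T) ∧ ∀ n, ¬IsNull f (T n) := by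
  rintro ⟨T, hT, hpos⟩
  obtain ⟨Φ, hΦ⟩ := exists_linearMap_of_pairwise_disjoint hf hT hpos
  rcases hrk with hrk | hrk
  · exact (mk_residueField_le_rank hΦ (Infinite.natEmbedding _)).not_gt hrk
  · exact (two_pow_aleph0_le_rank hΦ).not_gt hrk

end Algebras

/-- Let `R` be a commutative valuation ring with infinite
residue field `k`, `B` a (nonunital, nonassociative) `R`-algebra which is
torsion-free as an `R`-module, and `f : A = ∏ᵢ Aᵢ → B` a surjective
`R`-algebra homomorphism.  If `rk_R B < card k` (case (i)) or
`rk_R B < 2 ^ ℵ₀` (case (ii)), then the composite `A → B → B/Z(B)` factors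
through the natural map `A → A/U 0 × … × A/U (n-1)`, where the ultrafilters
`U m` on `I` are `card(k)⁺`-complete in case (i) and countably complete in
case (ii). -/
theorem composite_factors_valuation_ring
    (R : Type u) [CommRing R] [IsDomain R] [ValuationRing R]
    [Infinite (IsLocalRing.ResidueField R)]
    {I : Type u} (A : I → Type u)
    [∀ i, NonUnitalNonAssocRing (A i)] [∀ i, Module R (A i)]
    [∀ i, SMulCommClass R (A i) (A i)] [∀ i, IsScalarTower R (A i) (A i)]
    (B : Type u) [NonUnitalNonAssocRing B] [Module R B] [SMulCommClass R B B]
    [IsScalarTower R B B] [NoZeroSMulDivisors R B]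
    (f : (∀ i, A i) →ₙₐ[R] B) (hf : Function.Surjective f) :
    (Module.rank R B < Cardinal.mk (IsLocalRing.ResidueField R) →
      ∃ (n : ℕ) (U : Fin n → Ultrafilter I),
        (∀ m, KappaComplete
          (Order.succ (Cardinal.mk (IsLocalRing.ResidueField R)))
          (U m : Filter I)) ∧
        ∃ g : (∀ m, ReducedProduct (U m : Filter I) A) →
            B ⧸ totalAnnihilator R B,
          (fun a => Submodule.Quotient.mk (f a) :
              (∀ i, A i) → B ⧸ totalAnnihilator R B)
            = g ∘ fun (a : ∀ i, A i) (m : Fin n) =>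
                reducedMk (U m : Filter I) A a) ∧
    (Module.rank R B < 2 ^ Cardinal.aleph0 →
      ∃ (n : ℕ) (U : Fin n → Ultrafilter I),
        (∀ m, CountablyComplete (U m : Filter I)) ∧
        ∃ g : (∀ m, ReducedProduct (U m : Filter I) A) →
            B ⧸ totalAnnihilator R B,
          (fun a => Submodule.Quotient.mk (f a) :
              (∀ i, A i) → B ⧸ totalAnnihilator R B)
            = g ∘ fun (a : ∀ i, A i) (m : Fin n) =>
                reducedMk (U m : Filter I) A a) := by
  refine ⟨fun hrk => ?_, fun hrk => ?_⟩
  · have := cardinalInterFilter_nullFilter hf hrk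
    obtain ⟨n, U, hU, hg⟩ := exists_factorization_reducedProduct
      (not_exists_pairwise_disjoint_not_isNull hf (.inl hrk))
    refine ⟨n, U, fun m => ?_, hg⟩
    obtain ⟨P, hP⟩ := hU m
    rw [hP]
    exact fun 𝒮 h𝒮 hmem => CardinalInterFilter.cardinal_sInter_mem 𝒮 h𝒮 hmem
  · have := countableInterFilter_nullFilter hf hrk
    obtain ⟨n, U, hU, hg⟩ := exists_factorization_reducedProduct
      (not_exists_pairwise_disjoint_not_isNull hf (.inr hrk))
    refine ⟨n, U, fun m => ?_, hg⟩
    obtain ⟨P, hP⟩ := hU m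
    rw [hP]
    exact fun s hs => countable_iInter_mem.mpr hs
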